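/- Assume additionally that ρ (N−1) ≤ 2 · ρ 0. Then every eigenvalue μ of the real symmetric tridiagonal matrix C satisfies μ ≤ 4 / δρ⋆. -/

import Mathlib

/-!
By Gershgorin's theorem every eigenvalue of `C` is bounded in absolute value by an absolute row
sum of `C`. Each row has at most three nonzero entries, all built from reciprocals of adjacent
gaps, which are at most `1 / δ`, and from `1 / ρ 0`, which is at most `1 / δ` because
`δ ≤ ρ 1 - ρ 0 ≤ ρ (N - 1) - ρ 0 ≤ ρ 0`. So diagonal entries are at most `2 / δ` and the
off-diagonal ones at most `1 / δ`, and every row sum is at most `4 / δ`.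
-/

open Matrix Finset

namespace Matrix.IsHermitian

variable {𝕜 n : Type*} [RCLike 𝕜] [Fintype n] [DecidableEq n] {A : Matrix n n 𝕜}

theorem hasEigenvalue_toLin'_eigenvalues (hA : A.IsHermitian) (i : n) :
    Module.End.HasEigenvalue (toLin' A) (hA.eigenvalues i : 𝕜) := by
  rw [Module.End.hasEigenvalue_iff_mem_spectrum, spectrum_toLin']
  exact spectrum.algebraMap_mem 𝕜 (hA.eigenvalues_mem_spectrum_real i)

theorem abs_eigenvalues_le_of_sum_norm_le (hA : A.IsHermitian) {B : ℝ}
    (hB : ∀ k, ∑ j, ‖A k j‖ ≤ B) (i : n) : |hA.eigenvalues i| ≤ B := by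
  obtain ⟨k, hk⟩ := eigenvalue_mem_ball (hA.hasEigenvalue_toLin'_eigenvalues i)
  rw [mem_closedBall_iff_norm] at hk
  calc |hA.eigenvalues i| = ‖(hA.eigenvalues i : 𝕜)‖ := (RCLike.norm_ofReal _).symm
    _ ≤ ‖A k k‖ + ‖(hA.eigenvalues i : 𝕜) - A k k‖ := norm_le_norm_add_norm_sub' _ _
    _ ≤ ‖A k k‖ + ∑ j ∈ univ.erase k, ‖A k j‖ := by gcongr
    _ = ∑ j, ‖A k j‖ := add_sum_erase _ (fun j => ‖A k j‖) (mem_univ k)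
    _ ≤ B := hB k

end Matrix.IsHermitian

theorem sum_ite_val_eq_le {N m : ℕ} {c : ℝ} (hc : 0 ≤ c) :
    ∑ j : Fin N, (if j.val = m then c else 0) ≤ c := by
  rw [Fin.sum_univ_eq_sum_range (fun i => if i = m then c else 0), sum_ite_eq']
  split_ifs <;> linarith

theorem abs_one_div_le_one_div {x δ : ℝ} (hδ : 0 < δ) (h : δ ≤ x) : |1 / x| ≤ 1 / δ := by
  rw [abs_of_pos (one_div_pos.mpr (hδ.trans_le h))]
  exact one_div_le_one_div_of_le hδ h

noncomputable def layerMatrix (N : ℕ) (ρ : ℕ → ℝ) : Matrix (Fin N) (Fin N) ℝ :=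
  of fun i j =>
    if i.val = j.val then
      (if i.val = 0 then 1 / ρ 0 + 1 / (ρ 1 - ρ 0)
       else if i.val = N - 1 then 1 / (ρ (N - 1) - ρ (N - 2))
       else 1 / (ρ i.val - ρ (i.val - 1)) + 1 / (ρ (i.val + 1) - ρ i.val))
    else if i.val + 1 = j.val ∨ j.val + 1 = i.val then
      -(1 / (ρ (max i.val j.val) - ρ (min i.val j.val)))
    else 0

section LayerMatrix

variable {N : ℕ} {ρ : ℕ → ℝ} {δ : ℝ}

theorem abs_one_div_gap_le (hδ : 0 < δ) (hgap : ∀ m, m + 1 < N → δ ≤ ρ (m + 1) - ρ m)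
    {i j : ℕ} (hij : i + 1 = j) (hj : j < N) : |1 / (ρ j - ρ i)| ≤ 1 / δ := by
  subst hij
  exact abs_one_div_le_one_div hδ (hgap i hj)

theorem abs_layerMatrix_diag_le (hN : 2 ≤ N) (hδ : 0 < δ) (hδρ : δ ≤ ρ 0)
    (hgap : ∀ m, m + 1 < N → δ ≤ ρ (m + 1) - ρ m) (k : Fin N) :
    |layerMatrix N ρ k k| ≤ 2 / δ := by
  have hk := k.isLt
  have two_div : 2 / δ = 1 / δ + 1 / δ := by ring
  simp only [layerMatrix, of_apply, if_true]
  split_ifs with h0 hlast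
  · calc |1 / ρ 0 + 1 / (ρ 1 - ρ 0)| ≤ |1 / ρ 0| + |1 / (ρ 1 - ρ 0)| := abs_add_le _ _
      _ ≤ 2 / δ := two_div ▸ add_le_add (abs_one_div_le_one_div hδ hδρ)
          (abs_one_div_gap_le hδ hgap (by omega) (by omega))
  · calc |1 / (ρ (N - 1) - ρ (N - 2))| ≤ 1 / δ := abs_one_div_gap_le hδ hgap (by omega) (by omega)
      _ ≤ 2 / δ := by rw [two_div]; linarith [one_div_pos.mpr hδ]
  · calc |1 / (ρ k - ρ (k - 1)) + 1 / (ρ (k + 1) - ρ k)|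
        ≤ |1 / (ρ k - ρ (k - 1))| + |1 / (ρ (k + 1) - ρ k)| := abs_add_le _ _
      _ ≤ 2 / δ := two_div ▸ add_le_add (abs_one_div_gap_le hδ hgap (by omega) (by omega))
          (abs_one_div_gap_le hδ hgap rfl (by omega))

theorem abs_layerMatrix_of_adjacent_le (hδ : 0 < δ)
    (hgap : ∀ m, m + 1 < N → δ ≤ ρ (m + 1) - ρ m) {k j : Fin N}
    (hkj : k.val + 1 = j.val ∨ j.val + 1 = k.val) :
    |layerMatrix N ρ k j| ≤ 1 / δ := by
  have hne : k.val ≠ j.val := by omega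
  simp only [layerMatrix, of_apply, if_neg hne, if_pos hkj, abs_neg]
  exact abs_one_div_gap_le hδ hgap (by omega) (by omega)

theorem layerMatrix_of_not_adjacent {k j : Fin N} (hne : k.val ≠ j.val)
    (hkj : ¬(k.val + 1 = j.val ∨ j.val + 1 = k.val)) : layerMatrix N ρ k j = 0 := by
  simp only [layerMatrix, of_apply, if_neg hne, if_neg hkj]

theorem abs_layerMatrix_le (hN : 2 ≤ N) (hδ : 0 < δ) (hδρ : δ ≤ ρ 0)
    (hgap : ∀ m, m + 1 < N → δ ≤ ρ (m + 1) - ρ m) (k j : Fin N) :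
    |layerMatrix N ρ k j| ≤ (if j.val = k.val then 2 / δ else 0)
      + (if j.val = k.val + 1 then 1 / δ else 0) + (if j.val = k.val - 1 then 1 / δ else 0) := by
  -- for `k = 0` the truncated `k - 1 = 0` only makes the last term a harmless overestimate
  have hδ' : 0 < 1 / δ := one_div_pos.mpr hδ
  by_cases hdiag : k.val = j.val
  · obtain rfl : k = j := Fin.ext hdiag
    have := abs_layerMatrix_diag_le hN hδ hδρ hgap k
    split_ifs <;> linarith
  by_cases hadj : k.val + 1 = j.val ∨ j.val + 1 = k.val
  · have := abs_layerMatrix_of_adjacent_le hδ hgap hadj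
    split_ifs <;> first | omega | linarith
  · rw [layerMatrix_of_not_adjacent hdiag hadj, abs_zero]
    split_ifs <;> first | omega | linarith

theorem sum_abs_layerMatrix_le (hN : 2 ≤ N) (hδ : 0 < δ) (hδρ : δ ≤ ρ 0)
    (hgap : ∀ m, m + 1 < N → δ ≤ ρ (m + 1) - ρ m) (k : Fin N) :
    ∑ j, |layerMatrix N ρ k j| ≤ 4 / δ := by
  have hδ' : 0 ≤ 1 / δ := (one_div_pos.mpr hδ).le
  calc ∑ j, |layerMatrix N ρ k j|
      ≤ ∑ j : Fin N, ((if j.val = k.val then 2 / δ else 0)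
          + (if j.val = k.val + 1 then 1 / δ else 0)
          + (if j.val = k.val - 1 then 1 / δ else 0)) :=
        sum_le_sum fun j _ => abs_layerMatrix_le hN hδ hδρ hgap k j
    _ ≤ 2 / δ + 1 / δ + 1 / δ := by
        rw [sum_add_distrib, sum_add_distrib]
        gcongr
        · exact sum_ite_val_eq_le (by positivity)
        · exact sum_ite_val_eq_le hδ'
        · exact sum_ite_val_eq_le hδ'
    _ = 4 / δ := by ring

end LayerMatrix

/-- If `ρ (N-1) ≤ 2 ρ 0`, every eigenvalue of the tridiagonal matrix `C`
is at most `4 / δρ⋆`, where `δρ⋆` is the minimal adjacent density gap. -/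
theorem tridiagonal_max_eigenvalue_upper_bound
    (N : ℕ) (hN : 2 ≤ N) (ρ : ℕ → ℝ)
    (hρ : ∀ i j, i < j → j < N → ρ i < ρ j)
    (hρN : ρ (N - 1) ≤ 2 * ρ 0)
    (C : Matrix (Fin N) (Fin N) ℝ)
    (hC : ∀ i j : Fin N, C i j =
      if i.val = j.val then
        (if i.val = 0 then 1 / ρ 0 + 1 / (ρ 1 - ρ 0)
         else if i.val = N - 1 then 1 / (ρ (N - 1) - ρ (N - 2))
         else 1 / (ρ i.val - ρ (i.val - 1)) + 1 / (ρ (i.val + 1) - ρ i.val))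
      else if i.val + 1 = j.val ∨ j.val + 1 = i.val then
        -(1 / (ρ (max i.val j.val) - ρ (min i.val j.val)))
      else 0)
    (hHerm : C.IsHermitian)
    (δ : ℝ)
    (hδ : δ = Finset.inf' (Finset.range (N - 1))
        ⟨0, Finset.mem_range.mpr (by omega)⟩ (fun i => ρ (i + 1) - ρ i)) :
    ∀ i : Fin N, hHerm.eigenvalues i ≤ 4 / δ := by
  have hC : C = layerMatrix N ρ := Matrix.ext hC
  have hgap : ∀ m, m + 1 < N → δ ≤ ρ (m + 1) - ρ m := fun m hm =>
    hδ ▸ inf'_le _ (mem_range.mpr (by omega))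
  have hδpos : 0 < δ := hδ ▸ (lt_inf'_iff _).mpr fun m hm =>
    sub_pos.mpr (hρ m (m + 1) (by omega) (by have := mem_range.mp hm; omega))
  have hδρ : δ ≤ ρ 0 := by
    have h1 : ρ 1 ≤ ρ (N - 1) := by
      rcases (show 1 < N - 1 ∨ 1 = N - 1 by omega) with h | h
      · exact (hρ 1 (N - 1) h (by omega)).le
      · rw [← h]
    linarith [hgap 0 (by omega)]
  intro i
  refine (le_abs_self _).trans (hHerm.abs_eigenvalues_le_of_sum_norm_le (fun k => ?_) i)
  simpa only [hC, Real.norm_eq_abs] using sum_abs_layerMatrix_le hN hδpos hδρ hgap k
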